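/- In the Battling Influencers Game with finite action space F, for every player i, every pair of actions S, S' ∈ 𝒟^{(k_i)} for player i, and every joint action of the others, the loss difference equals the potential difference: ℓ_i(S, S_{−i}) − ℓ_i(S', S_{−i}) = Φ(S, S_{−i}) − Φ(S', S_{−i}), where Φ({S_i}_{i=1}^n) = ‖w_0 x_0 + ∑_{i=1}^n w_i' x_i'‖₂² − 2 ∑_{i=1}^n w_i' ⟨t_i, x_i'⟩ with w_i' = w_i k_i and x_i' = (1/k_i) ∑_{v ∈ S_i} v. Hence F is an exact potential game. -/

import Mathlib

/-!
Since `w_i' x_i' = w_i ∑_{v ∈ S_i} v`, the potential is `‖x̂‖² − 2 ∑ w_i ⟨t_i, ∑ S_i⟩`, while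
`ℓ_i = ‖x̂‖² − 2 ⟨x̂, t_i⟩ + ‖t_i‖²`. A deviation of player `i` moves `x̂` by
`δ = w_i (∑ S_i' − ∑ S_i)` and the linear part of the potential by exactly `⟨t_i, δ⟩`, which is
the change of the cross term of `ℓ_i`; `‖t_i‖²` does not move.
-/

open scoped RealInnerProductSpace

noncomputable section

/-- The receiver's point in the Battling Influencers Game with finite action
space: `x̂ = w_0 x_0 + ∑_{i=1}^n w_i ∑_{j=1}^{k_i} x_i^{(j)}`, where player `i`'s
action is the `k_i`-tuple `S i`. -/
def receiverF {d n : ℕ} (k : Fin n → ℕ) (w0 : ℝ) (x0 : EuclideanSpace ℝ (Fin d))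
    (w : Fin n → ℝ) (S : (i : Fin n) → Fin (k i) → EuclideanSpace ℝ (Fin d)) :
    EuclideanSpace ℝ (Fin d) :=
  w0 • x0 + ∑ i, w i • ∑ j, S i j

/-- Player `i`'s loss: `ℓ_i = ‖x̂ − t_i‖₂²`. -/
def lossF {d n : ℕ} (k : Fin n → ℕ) (w0 : ℝ) (x0 : EuclideanSpace ℝ (Fin d))
    (w : Fin n → ℝ) (t : Fin n → EuclideanSpace ℝ (Fin d)) (i : Fin n)
    (S : (i : Fin n) → Fin (k i) → EuclideanSpace ℝ (Fin d)) : ℝ :=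
  ‖receiverF k w0 x0 w S - t i‖ ^ 2

/-- The potential for the finite-action game, expressed through the meta items
`w_i' = w_i k_i` and `x_i' = (1/k_i) ∑_{j=1}^{k_i} x_i^{(j)}`:
`Φ = ‖w_0 x_0 + ∑ w_i' x_i'‖₂² − 2 ∑ w_i' ⟨t_i, x_i'⟩`. -/
def potentialF {d n : ℕ} (k : Fin n → ℕ) (w0 : ℝ) (x0 : EuclideanSpace ℝ (Fin d))
    (w : Fin n → ℝ) (t : Fin n → EuclideanSpace ℝ (Fin d))
    (S : (i : Fin n) → Fin (k i) → EuclideanSpace ℝ (Fin d)) : ℝ :=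
  ‖w0 • x0 + ∑ i, (w i * (k i : ℝ)) • ((k i : ℝ)⁻¹ • ∑ j, S i j)‖ ^ 2 -
    2 * ∑ i, (w i * (k i : ℝ)) * ⟪t i, (k i : ℝ)⁻¹ • ∑ j, S i j⟫

theorem Fintype.sum_apply_update_sub {ι M : Type*} [Fintype ι] [DecidableEq ι] {β : ι → Type*}
    [AddCommGroup M] (g : ∀ j, β j → M) (f : ∀ j, β j) (i : ι) (a : β i) :
    ∑ j, g j (Function.update f i a j) - ∑ j, g j (f j) = g i a - g i (f i) := by
  simp only [Function.apply_update g f i a]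
  rw [Finset.sum_update_of_mem (Finset.mem_univ i), Fintype.sum_eq_sum_compl_add i]
  simp only [Finset.compl_eq_univ_sdiff]
  abel

theorem natCast_smul_inv_smul_sum_fin {E : Type*} [AddCommGroup E] [Module ℝ E] {m : ℕ}
    (s : Fin m → E) : (m : ℝ) • ((m : ℝ)⁻¹ • ∑ j, s j) = ∑ j, s j := by
  rcases m with _ | m
  · simp -- `0⁻¹ = 0`, but the sum is empty too
  · rw [smul_smul, mul_inv_cancel₀ (by positivity), one_smul]

theorem norm_sub_sq_sub_norm_sub_sq {E : Type*} [NormedAddCommGroup E] [InnerProductSpace ℝ E]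
    (r r' t : E) : ‖r - t‖ ^ 2 - ‖r' - t‖ ^ 2 = ‖r‖ ^ 2 - ‖r'‖ ^ 2 + 2 * ⟪t, r' - r⟫ := by
  rw [norm_sub_sq_real, norm_sub_sq_real, inner_sub_right, real_inner_comm r, real_inner_comm r']
  ring

section BattlingInfluencers

variable {d n : ℕ} (k : Fin n → ℕ) (w0 : ℝ) (x0 : EuclideanSpace ℝ (Fin d)) (w : Fin n → ℝ)
  (t : Fin n → EuclideanSpace ℝ (Fin d))

theorem potentialF_eq_norm_receiverF_sq_sub
    (S : (i : Fin n) → Fin (k i) → EuclideanSpace ℝ (Fin d)) :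
    potentialF k w0 x0 w t S =
      ‖receiverF k w0 x0 w S‖ ^ 2 - 2 * ∑ i, w i * ⟪t i, ∑ j, S i j⟫ := by
  have hmean : ∀ i, (w i * (k i : ℝ)) • ((k i : ℝ)⁻¹ • ∑ j, S i j) = w i • ∑ j, S i j :=
    fun i ↦ by rw [mul_smul, natCast_smul_inv_smul_sum_fin]
  have hinner : ∀ i, (w i * (k i : ℝ)) * ⟪t i, (k i : ℝ)⁻¹ • ∑ j, S i j⟫ =
      w i * ⟪t i, ∑ j, S i j⟫ :=
    fun i ↦ by rw [← real_inner_smul_right, hmean, real_inner_smul_right]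
  simp only [potentialF, receiverF, hmean, hinner]

variable (S : (i : Fin n) → Fin (k i) → EuclideanSpace ℝ (Fin d)) (i : Fin n)
  (S' : Fin (k i) → EuclideanSpace ℝ (Fin d))

theorem receiverF_update_sub :
    receiverF k w0 x0 w (Function.update S i S') - receiverF k w0 x0 w S =
      w i • (∑ j, S' j - ∑ j, S i j) := by
  rw [receiverF, receiverF, add_sub_add_left_eq_sub,
    Fintype.sum_apply_update_sub (fun i (s : Fin (k i) → _) ↦ w i • ∑ j, s j) S i S', smul_sub]

theorem sum_mul_inner_update_sub :
    ∑ i', w i' * ⟪t i', ∑ j, Function.update S i S' i' j⟫ - ∑ i', w i' * ⟪t i', ∑ j, S i' j⟫ =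
      ⟪t i, w i • (∑ j, S' j - ∑ j, S i j)⟫ := by
  rw [Fintype.sum_apply_update_sub (fun i (s : Fin (k i) → _) ↦ w i * ⟪t i, ∑ j, s j⟫) S i S',
    real_inner_smul_right, inner_sub_right, mul_sub]

end BattlingInfluencers

theorem bigF_exact_potential_general {d n : ℕ} (k : Fin n → ℕ)
    (w0 : ℝ) (x0 : EuclideanSpace ℝ (Fin d)) (w : Fin n → ℝ)
    (t : Fin n → EuclideanSpace ℝ (Fin d)) (i : Fin n)
    (S : (i : Fin n) → Fin (k i) → EuclideanSpace ℝ (Fin d))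
    (S' : Fin (k i) → EuclideanSpace ℝ (Fin d)) :
    lossF k w0 x0 w t i S - lossF k w0 x0 w t i (Function.update S i S')
      = potentialF k w0 x0 w t S
          - potentialF k w0 x0 w t (Function.update S i S') := by
  have hreceiver := receiverF_update_sub k w0 x0 w S i S'
  have hlinear := sum_mul_inner_update_sub k w t S i S'
  rw [lossF, lossF, norm_sub_sq_sub_norm_sub_sq, potentialF_eq_norm_receiverF_sq_sub,
    potentialF_eq_norm_receiverF_sq_sub, hreceiver]
  linarith

/-- The Battling Influencers Game with finite action space is an exact potential
game: for every player `i`, every pair of actions `S_i`, `S_i'` (tuples of `k_i`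
elements of the finite set `𝒳`), and every joint action of the others, the loss
difference equals the potential difference. -/
theorem bigF_exact_potential {d n : ℕ} (X : Set (EuclideanSpace ℝ (Fin d)))
    (hXfin : X.Finite) (k : Fin n → ℕ) (hk : ∀ i, 1 ≤ k i)
    (w0 : ℝ) (x0 : EuclideanSpace ℝ (Fin d)) (w : Fin n → ℝ)
    (t : Fin n → EuclideanSpace ℝ (Fin d)) (i : Fin n)
    (S : (i : Fin n) → Fin (k i) → EuclideanSpace ℝ (Fin d))
    (hS : ∀ i' j, S i' j ∈ X)
    (S' : Fin (k i) → EuclideanSpace ℝ (Fin d)) (hS' : ∀ j, S' j ∈ X) :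
    lossF k w0 x0 w t i S - lossF k w0 x0 w t i (Function.update S i S')
      = potentialF k w0 x0 w t S
          - potentialF k w0 x0 w t (Function.update S i S') :=
  bigF_exact_potential_general k w0 x0 w t i S S'

end
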